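/- arXiv:2207.07262 — 10 statements merged into one kernel-verified Lean document; each statement's English description precedes it below -/
import Mathlib

section
/- Let q be an odd prime power and let β be a (q+1)-th root of unity in GF(q^2) with β ≠ 1 and β ≠ -1. Then the set of (q+1)-th roots of unity in GF(q^2) other than β equals the set { (aβ+1)/(a+β) : a ∈ GF(q) }. -/
theorem stmt1 (q p n : ℕ) (hp : p.Prime) (hpodd : Odd p) (hn : 0 < n) (hq : q = p ^ n)
    (F : Type*) [Field F] [Fintype F] (hF : Fintype.card F = q ^ 2)
    (β : F) (hβ : β ^ (q + 1) = 1) (hβ1 : β ≠ 1) (hβ2 : β ≠ -1) :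
    {x : F | x ^ (q + 1) = 1 ∧ x ≠ β} =
      {x : F | ∃ a : F, a ^ q = a ∧ x = (a * β + 1) / (a + β)} := by
  haveI : Fact p.Prime := ⟨hp⟩
  -- characteristic of F is p
  haveI : CharP F (ringChar F) := ringChar.charP F
  obtain ⟨m, hrp, hcard⟩ := FiniteField.card F (ringChar F)
  have hchar : ringChar F = p := by
    have h1 : Fintype.card F = p ^ (2 * n) := by rw [hF, hq]; ring
    have hdvd : ringChar F ∣ p ^ (2 * n) := by
      rw [← h1, hcard]
      exact dvd_pow_self _ (by positivity)
    exact ((Nat.prime_dvd_prime_iff_eq hrp hp).mp (hrp.dvd_of_dvd_pow hdvd))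
  haveI : CharP F p := hchar ▸ ringChar.charP F
  have hqodd : Odd q := hq ▸ hpodd.pow
  have hadd : ∀ u v : F, (u + v) ^ q = u ^ q + v ^ q := by
    intro u v; rw [hq]; exact add_pow_char_pow ..
  have hsub : ∀ u v : F, (u - v) ^ q = u ^ q - v ^ q := by
    intro u v; rw [hq]; exact sub_pow_char_pow ..
  have hcardsq : ∀ x : F, x ^ (q ^ 2) = x := by
    intro x; rw [← hF]; exact FiniteField.pow_card x
  have hfrob2 : ∀ x : F, (x ^ q) ^ q = x := by
    intro x; rw [← pow_mul, ← sq]; exact hcardsq x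
  have hβ0 : β ≠ 0 := by
    intro h; rw [h] at hβ; simp at hβ
  have hβq : β ^ q = β⁻¹ := by
    have : β ^ q * β = 1 := by rw [← pow_succ]; exact hβ
    field_simp at this ⊢
    linear_combination this
  have hβsq : β ^ 2 ≠ 1 := by
    intro h
    rw [sq, mul_self_eq_one_iff] at h
    rcases h with h | h <;> [exact hβ1 h; exact hβ2 h]
  ext x
  simp only [Set.mem_setOf_eq]
  constructor
  · rintro ⟨hx, hxβ⟩
    have hx0 : x ≠ 0 := by intro h; rw [h] at hx; simp at hx
    have hxq : x ^ q = x⁻¹ := by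
      have : x ^ q * x = 1 := by rw [← pow_succ]; exact hx
      field_simp at this ⊢
      linear_combination this
    have hxβ' : x - β ≠ 0 := sub_ne_zero.mpr hxβ
    refine ⟨(1 - x * β) / (x - β), ?_, ?_⟩
    · rw [div_pow, hsub, hsub, mul_pow, hxq, hβq, one_pow]
      have hinv : x⁻¹ - β⁻¹ ≠ 0 := by
        rw [sub_ne_zero]
        intro h
        exact hxβ (by rw [← inv_inv x, h, inv_inv])
      rw [div_eq_div_iff hinv (sub_ne_zero.mpr hxβ)]
      field_simp
      ring
    · have ha : (1 - x * β) / (x - β) + β = (1 - β ^ 2) / (x - β) := by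
        field_simp; ring
      have hane : (1 - x * β) / (x - β) + β ≠ 0 := by
        rw [ha]
        exact div_ne_zero (sub_ne_zero.mpr fun h => hβsq h.symm) hxβ'
      rw [eq_div_iff hane]
      field_simp
      ring
  · rintro ⟨a, ha, rfl⟩
    have hane : a + β ≠ 0 := by
      intro h
      have haβ : a = -β := by linear_combination h
      rw [haβ, neg_pow, hβq, Odd.neg_one_pow hqodd] at ha
      have hβinv : β⁻¹ = β := by linear_combination -ha
      apply hβsq
      rw [sq]; nth_rewrite 2 [← hβinv]; exact mul_inv_cancel₀ hβ0
    have hane2 : a * β + 1 ≠ 0 := by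
      intro h
      have ha0 : a ≠ 0 := by
        intro h0; rw [h0, zero_mul, zero_add] at h; exact one_ne_zero h
      have haβ : a * β = -1 := by linear_combination h
      have hfq : (a * β) ^ q = (-1 : F) ^ q := by rw [haβ]
      rw [mul_pow, ha, hβq, Odd.neg_one_pow hqodd] at hfq
      have hβinv : β⁻¹ = β := mul_left_cancel₀ ha0 (by rw [hfq, haβ])
      apply hβsq
      rw [sq]; nth_rewrite 2 [← hβinv]; exact mul_inv_cancel₀ hβ0
    constructor
    · rw [pow_succ, div_pow, hadd, hadd, mul_pow, one_pow, ha, hβq]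
      have h1 : a + β⁻¹ ≠ 0 := by
        intro h
        apply hane2
        have hkey : β * (a + β⁻¹) = a * β + 1 := by
          rw [mul_add, mul_inv_cancel₀ hβ0]; ring
        rw [← hkey, h, mul_zero]
      rw [div_mul_div_comm, div_eq_one_iff_eq (mul_ne_zero h1 hane)]
      field_simp
    · intro h
      rw [div_eq_iff hane] at h
      apply hβsq
      linear_combination -h
end

section
/- Let a be an odd integer with a > 1 and let u, v be positive integers. If the 2-adic valuation of v is at most the 2-adic valuation of u, then gcd(a^u + 1, a^v - 1) = 2; if the 2-adic valuation of v is strictly greater than that of u, then gcd(a^u + 1, a^v - 1) = a^{gcd(u,v)} + 1. -/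
private lemma v2_le_of_dvd {m n : ℕ} (hn : n ≠ 0) (h : m ∣ n) :
    padicValNat 2 m ≤ padicValNat 2 n :=
  (padicValNat_dvd_iff_le hn).mp (pow_padicValNat_dvd.trans h)

private lemma gcd_pow_sub_one (a : ℕ) (ha : 0 < a) :
    ∀ m n : ℕ, Nat.gcd (a ^ m - 1) (a ^ n - 1) = a ^ Nat.gcd m n - 1 := by
  intro m n
  induction m, n using Nat.gcd.induction with
  | H0 n => simp
  | H1 m n hm ih =>
    have hpow : ∀ k : ℕ, 1 ≤ a ^ k := fun k => Nat.one_le_pow _ _ ha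
    have hd : a ^ m - 1 ∣ a ^ (m * (n / m)) - 1 := by
      rw [pow_mul]
      simpa using Nat.sub_dvd_pow_sub_pow (a ^ m) 1 (n / m)
    have h1 : a ^ (n % m) * a ^ (m * (n / m)) = a ^ n := by
      rw [← pow_add]; congr 1; exact Nat.mod_add_div n m
    have hms : a ^ (n % m) * (a ^ (m * (n / m)) - 1)
        = a ^ (n % m) * a ^ (m * (n / m)) - a ^ (n % m) * 1 := Nat.mul_sub _ _ _
    have key : a ^ n - 1 = a ^ (n % m) * (a ^ (m * (n / m)) - 1) + (a ^ (n % m) - 1) := by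
      have h2 := hpow (n % m)
      have h3 := hpow (m * (n / m))
      have h4 := hpow n
      have h5 : a ^ (n % m) ≤ a ^ (n % m) * a ^ (m * (n / m)) :=
        Nat.le_mul_of_pos_right _ (h3)
      omega
    have e1 : Nat.gcd (a ^ m - 1) (a ^ n - 1) = Nat.gcd (a ^ (n % m) - 1) (a ^ m - 1) := by
      rw [Nat.gcd_comm (a ^ (n % m) - 1)]
      apply Nat.dvd_antisymm
      · refine Nat.dvd_gcd (Nat.gcd_dvd_left _ _) ?_
        have h6 : a ^ (n % m) - 1
            = (a ^ n - 1) - a ^ (n % m) * (a ^ (m * (n / m)) - 1) := by omega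
        rw [h6]
        exact Nat.dvd_sub (Nat.gcd_dvd_right _ _)
          (Dvd.dvd.mul_left ((Nat.gcd_dvd_left _ _).trans hd) _)
      · refine Nat.dvd_gcd (Nat.gcd_dvd_left _ _) ?_
        rw [key]
        exact dvd_add (Dvd.dvd.mul_left ((Nat.gcd_dvd_left _ _).trans hd) _)
          (Nat.gcd_dvd_right _ _)
    rw [e1, ih, Nat.gcd_rec m n]

theorem stmt2 (a u v : ℕ) (ha : Odd a) (ha1 : 1 < a) (hu : 0 < u) (hv : 0 < v) :
    (padicValNat 2 v ≤ padicValNat 2 u → Nat.gcd (a ^ u + 1) (a ^ v - 1) = 2) ∧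
    (padicValNat 2 u < padicValNat 2 v →
      Nat.gcd (a ^ u + 1) (a ^ v - 1) = a ^ (Nat.gcd u v) + 1) := by
  have ha0 : 0 < a := by omega
  have hpow : ∀ k : ℕ, 1 ≤ a ^ k := fun k => Nat.one_le_pow _ _ ha0
  have hodd : ∀ k : ℕ, Odd (a ^ k) := fun k => ha.pow
  set g := Nat.gcd u v with hgdef
  have hgu : g ∣ u := Nat.gcd_dvd_left u v
  have hgv : g ∣ v := Nat.gcd_dvd_right u v
  have hg0 : 0 < g := Nat.gcd_pos_of_pos_left _ hu
  set d := Nat.gcd (a ^ u + 1) (a ^ v - 1) with hddef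
  have hd1 : d ∣ a ^ u + 1 := Nat.gcd_dvd_left _ _
  have hd2 : d ∣ a ^ v - 1 := Nat.gcd_dvd_right _ _
  -- (a^k+1)*(a^k-1) = a^(2k)-1
  have hsq : ∀ k : ℕ, a ^ (2 * k) - 1 = (a ^ k + 1) * (a ^ k - 1) := by
    intro k
    obtain ⟨y, hy⟩ : ∃ y, a ^ k = y + 1 := ⟨a ^ k - 1, by have := hpow k; omega⟩
    have h2 : a ^ (2 * k) = a ^ k * a ^ k := by rw [two_mul, pow_add]
    rw [hy] at h2 ⊢
    have e1 : (y + 1) * (y + 1) = y * y + 2 * y + 1 := by ring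
    have e2 : (y + 1 + 1) * (y + 1 - 1) = y * y + 2 * y := by
      rw [Nat.add_sub_cancel]; ring
    omega
  have hdvdpow : ∀ {m n : ℕ}, m ∣ n → a ^ m - 1 ∣ a ^ n - 1 := by
    rintro m n ⟨c, rfl⟩
    rw [pow_mul]
    simpa using Nat.sub_dvd_pow_sub_pow (a ^ m) 1 c
  have hd3 : d ∣ a ^ (2 * u) - 1 := by
    refine hd1.trans ?_
    rw [hsq u]; exact dvd_mul_right _ _
  have hd4 : d ∣ a ^ (Nat.gcd (2 * u) v) - 1 := by
    rw [← gcd_pow_sub_one a ha0 (2 * u) v]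
    exact Nat.dvd_gcd hd3 hd2
  have hgcd2g : Nat.gcd (2 * u) v ∣ 2 * g := by
    have h2 : Nat.gcd (2 * u) (2 * v) = 2 * g := Nat.gcd_mul_left 2 u v
    rw [← h2]
    exact Nat.dvd_gcd (Nat.gcd_dvd_left _ _)
      ((Nat.gcd_dvd_right _ _).trans (dvd_mul_left v 2))
  have hsub2 : a ^ u + 1 - (a ^ u - 1) = 2 := by have := hpow u; omega
  constructor
  · -- case v2 v ≤ v2 u
    intro h
    have h2v : (2 : ℕ) ^ padicValNat 2 v ∣ u := (padicValNat_dvd_iff_le hu.ne').mpr h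
    have h2g : (2 : ℕ) ^ padicValNat 2 v ∣ g := Nat.dvd_gcd h2v pow_padicValNat_dvd
    have hgcd : Nat.gcd (2 * u) v = g := by
      have hdvd1 : g ∣ Nat.gcd (2 * u) v := Nat.dvd_gcd (hgu.mul_left 2) hgv
      obtain ⟨k, hk⟩ := hdvd1
      have hk2 : g * k ∣ g * 2 := by rw [← hk, mul_comm g 2]; exact hgcd2g
      have hkdvd : k ∣ 2 := (mul_dvd_mul_iff_left hg0.ne').mp hk2
      have hk0 : 0 < k := by
        rcases Nat.eq_zero_or_pos k with h0 | h0
        · exfalso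
          have : Nat.gcd (2 * u) v = 0 := by rw [hk, h0, mul_zero]
          have := Nat.eq_zero_of_gcd_eq_zero_right this
          omega
        · exact h0
      have hkle : k ≤ 2 := Nat.le_of_dvd (by norm_num) hkdvd
      interval_cases k
      · omega
      · exfalso
        have hvv : 2 * g ∣ v := by
          have h5 := Nat.gcd_dvd_right (2 * u) v
          rw [hk, mul_comm g 2] at h5
          exact h5
        have hpow2 : (2 : ℕ) ^ (padicValNat 2 v + 1) ∣ v := by
          refine dvd_trans ?_ hvv
          rw [pow_succ]
          calc (2:ℕ) ^ padicValNat 2 v * 2 ∣ g * 2 := mul_dvd_mul_right h2g 2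
            _ = 2 * g := mul_comm _ _
        have := (padicValNat_dvd_iff_le hv.ne').mp hpow2
        omega
    rw [hgcd] at hd4
    have hdu : d ∣ a ^ u - 1 := hd4.trans (hdvdpow hgu)
    have hdvd2 : d ∣ 2 := hsub2 ▸ Nat.dvd_sub hd1 hdu
    have h2d : 2 ∣ d := by
      refine Nat.dvd_gcd ?_ ?_
      · exact Even.two_dvd (Odd.add_one (hodd u))
      · exact Even.two_dvd (Nat.Odd.sub_odd (hodd v) odd_one)
    exact Nat.dvd_antisymm hdvd2 h2d
  · -- case v2 u < v2 v
    intro h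
    have hα : (2 : ℕ) ^ padicValNat 2 u ∣ v := (padicValNat_dvd_iff_le hv.ne').mpr h.le
    have hαg : (2 : ℕ) ^ padicValNat 2 u ∣ g := Nat.dvd_gcd pow_padicValNat_dvd hα
    have hgeu : g ≤ u := Nat.le_of_dvd hu hgu
    have hueq : g * (u / g) = u := Nat.mul_div_cancel' hgu
    have hveq : g * (v / g) = v := Nat.mul_div_cancel' hgv
    -- u / g is odd
    have hug : Odd (u / g) := by
      rw [Nat.odd_iff]
      by_contra h'
      have h2 : 2 ∣ u / g := by omega
      obtain ⟨t, ht⟩ := h2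
      have h2gu : 2 * g ∣ u := ⟨t, by rw [← hueq, ht]; ring⟩
      have hpow2 : (2 : ℕ) ^ (padicValNat 2 u + 1) ∣ u := by
        refine dvd_trans ?_ h2gu
        rw [pow_succ]
        calc (2:ℕ) ^ padicValNat 2 u * 2 ∣ g * 2 := mul_dvd_mul_right hαg 2
          _ = 2 * g := mul_comm _ _
      have := (padicValNat_dvd_iff_le hu.ne').mp hpow2
      omega
    -- 2g ∣ v
    have h2gv : 2 * g ∣ v := by
      by_contra h'
      have hvg : ¬ (2 ∣ v / g) := by
        rintro ⟨t, ht⟩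
        exact h' ⟨t, by rw [← hveq, ht]; ring⟩
      have hvg0 : v / g ≠ 0 := by
        intro h0; rw [h0, mul_zero] at hveq; omega
      have hmul := padicValNat.mul (p := 2) hg0.ne' hvg0
      rw [hveq] at hmul
      have hvg2 : padicValNat 2 (v / g) = 0 := padicValNat.eq_zero_of_not_dvd hvg
      have hgle : padicValNat 2 g ≤ padicValNat 2 u := v2_le_of_dvd hu.ne' hgu
      omega
    have hgcd : Nat.gcd (2 * u) v = 2 * g :=
      Nat.dvd_antisymm hgcd2g (Nat.dvd_gcd (mul_dvd_mul_left 2 hgu) h2gv)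
    rw [hgcd] at hd4
    -- a^g + 1 ∣ d
    have hQ : a ^ g + 1 ∣ a ^ u + 1 := by
      have he : (a ^ g) ^ (u / g) + 1 ^ (u / g) = a ^ u + 1 := by
        rw [one_pow, ← pow_mul, hueq]
      have := Odd.nat_add_dvd_pow_add_pow (a ^ g) 1 hug
      rwa [he] at this
    have hP : a ^ g + 1 ∣ a ^ v - 1 := by
      have h1 : a ^ g + 1 ∣ a ^ (2 * g) - 1 := by
        rw [hsq g]; exact dvd_mul_right _ _
      exact h1.trans (hdvdpow h2gv)
    have hPd : a ^ g + 1 ∣ d := Nat.dvd_gcd hQ hP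
    -- d ∣ 2 * (a^g+1)
    have hgcdd : Nat.gcd d (a ^ g - 1) ∣ 2 := by
      have h1 : Nat.gcd d (a ^ g - 1) ∣ a ^ u - 1 :=
        (Nat.gcd_dvd_right _ _).trans (hdvdpow hgu)
      have h2 : Nat.gcd d (a ^ g - 1) ∣ a ^ u + 1 := (Nat.gcd_dvd_left _ _).trans hd1
      exact hsub2 ▸ Nat.dvd_sub h2 h1
    have hdd : d ∣ 2 * (a ^ g + 1) := by
      have h1 : d ∣ Nat.gcd (d * (a ^ g + 1)) ((a ^ g - 1) * (a ^ g + 1)) := by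
        refine Nat.dvd_gcd (dvd_mul_right _ _) ?_
        have : (a ^ g - 1) * (a ^ g + 1) = a ^ (2 * g) - 1 := by
          rw [hsq g, mul_comm]
        rw [this]; exact hd4
      rw [Nat.gcd_mul_right] at h1
      exact h1.trans (mul_dvd_mul_right hgcdd _)
    obtain ⟨k, hk⟩ := hPd
    have hk2 : k ∣ 2 := by
      have h1 : (a ^ g + 1) * k ∣ (a ^ g + 1) * 2 := by
        rw [← hk, mul_comm (a ^ g + 1) 2]; exact hdd
      exact (mul_dvd_mul_iff_left (by positivity : (a:ℕ) ^ g + 1 ≠ 0)).mp h1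
    have hk0 : 0 < k := by
      rcases Nat.eq_zero_or_pos k with h0 | h0
      · exfalso
        have hd0 : d = 0 := by rw [hk, h0, mul_zero]
        have := Nat.eq_zero_of_gcd_eq_zero_left (hddef ▸ hd0 : Nat.gcd (a ^ u + 1) (a ^ v - 1) = 0)
        omega
      · exact h0
    have hkle : k ≤ 2 := Nat.le_of_dvd (by norm_num) hk2
    interval_cases k
    · rw [hk, mul_one]
    · exfalso
      -- d = 2(a^g+1) ∣ a^u+1, but also 2(a^g+1) ∣ a^u - a^g
      have hd2g : 2 * (a ^ g + 1) ∣ a ^ u + 1 := by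
        have : d = 2 * (a ^ g + 1) := by rw [hk, mul_comm]
        exact this ▸ hd1
      obtain ⟨t, ht⟩ := hug
      have h2gug : 2 * g ∣ u - g :=
        ⟨t, by rw [show u = 2 * g * t + g from by rw [← hueq, ht]; ring]; omega⟩
      have hB : 2 * (a ^ g + 1) ∣ a ^ (2 * g) - 1 := by
        rw [hsq g]
        have h2' : 2 ∣ a ^ g - 1 := Even.two_dvd (Nat.Odd.sub_odd (hodd g) odd_one)
        calc 2 * (a ^ g + 1) = (a ^ g + 1) * 2 := mul_comm _ _
          _ ∣ (a ^ g + 1) * (a ^ g - 1) := mul_dvd_mul_left _ h2'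
      have hC : a ^ (u - g) - 1 ∣ a ^ u - a ^ g := by
        have he : a ^ g * a ^ (u - g) = a ^ u := by rw [← pow_add]; congr 1; omega
        have hm : a ^ g * (a ^ (u - g) - 1) = a ^ g * a ^ (u - g) - a ^ g * 1 :=
          Nat.mul_sub _ _ _
        have : a ^ u - a ^ g = a ^ g * (a ^ (u - g) - 1) := by omega
        rw [this]
        exact Dvd.dvd.mul_left dvd_rfl _
      have hAU : 2 * (a ^ g + 1) ∣ a ^ u - a ^ g :=
        (hB.trans (hdvdpow h2gug)).trans hC
      have hle : a ^ g ≤ a ^ u := Nat.pow_le_pow_right ha0 hgeu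
      have hfin : 2 * (a ^ g + 1) ∣ a ^ g + 1 := by
        have e : (a ^ u + 1) - (a ^ u - a ^ g) = a ^ g + 1 := by omega
        have h6 := Nat.dvd_sub hd2g hAU
        rwa [e] at h6
      have := Nat.le_of_dvd (by positivity) hfin
      omega
end

section
/- Let a be an odd integer with a > 1 and let u, v be positive integers. If the 2-adic valuations of u and v are different, then gcd(a^u + 1, a^v + 1) = 2; if the 2-adic valuations of u and v are equal, then gcd(a^u + 1, a^v + 1) = a^{gcd(u,v)} + 1. -/
private lemma gcd_helper1 {x y k n : ℕ} (h : x + y = k * n) :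
    Nat.gcd x n = Nat.gcd y n := by
  apply Nat.dvd_antisymm
  · apply Nat.dvd_gcd _ (Nat.gcd_dvd_right x n)
    have h1 : Nat.gcd x n ∣ k * n := Dvd.dvd.mul_left (Nat.gcd_dvd_right x n) k
    have h2 := Nat.dvd_sub h1 (Nat.gcd_dvd_left x n)
    have h3 : k * n - x = y := by omega
    rwa [h3] at h2
  · apply Nat.dvd_gcd _ (Nat.gcd_dvd_right y n)
    have h1 : Nat.gcd y n ∣ k * n := Dvd.dvd.mul_left (Nat.gcd_dvd_right y n) k
    have h2 := Nat.dvd_sub h1 (Nat.gcd_dvd_left y n)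
    have h3 : k * n - y = x := by omega
    rwa [h3] at h2

private lemma v2_add_of_lt {x y : ℕ} (hx : x ≠ 0) (hy : y ≠ 0)
    (h : padicValNat 2 x < padicValNat 2 y) :
    padicValNat 2 (x + y) = padicValNat 2 x := by
  have hxy : x + y ≠ 0 := by omega
  apply Nat.le_antisymm
  · by_contra hlt
    push_neg at hlt
    have h1 : (2 : ℕ) ^ (padicValNat 2 x + 1) ∣ x + y :=
      (padicValNat_dvd_iff_le hxy).mpr hlt
    have h2 : (2 : ℕ) ^ (padicValNat 2 x + 1) ∣ y :=
      (padicValNat_dvd_iff_le hy).mpr h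
    have h3 := Nat.dvd_sub h1 h2
    rw [Nat.add_sub_cancel] at h3
    exact absurd ((padicValNat_dvd_iff_le hx).mp h3) (by omega)
  · rw [← padicValNat_dvd_iff_le hxy]
    exact dvd_add pow_padicValNat_dvd ((padicValNat_dvd_iff_le hy).mpr h.le)

private lemma v2_add_of_eq {x y : ℕ} (hx : x ≠ 0) (hy : y ≠ 0)
    (h : padicValNat 2 x = padicValNat 2 y) :
    padicValNat 2 x < padicValNat 2 (x + y) := by
  have hxy : x + y ≠ 0 := by omega
  set k := padicValNat 2 x with hk
  have h1 : (2 : ℕ) ^ k ∣ x := pow_padicValNat_dvd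
  have h2 : (2 : ℕ) ^ k ∣ y := h ▸ pow_padicValNat_dvd
  obtain ⟨x', hx'⟩ := h1
  obtain ⟨y', hy'⟩ := h2
  have hox : ¬ 2 ∣ x' := by
    intro hd
    obtain ⟨x'', hx''⟩ := hd
    have : (2 : ℕ) ^ (k + 1) ∣ x := ⟨x'', by rw [hx', hx'']; ring⟩
    exact absurd ((padicValNat_dvd_iff_le hx).mp this) (by omega)
  have hoy : ¬ 2 ∣ y' := by
    intro hd
    obtain ⟨y'', hy''⟩ := hd
    have : (2 : ℕ) ^ (k + 1) ∣ y := ⟨y'', by rw [hy', hy'']; ring⟩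
    exact absurd ((padicValNat_dvd_iff_le hy).mp this) (by omega)
  have heven : 2 ∣ x' + y' := by omega
  obtain ⟨z, hz⟩ := heven
  have hdvd : (2 : ℕ) ^ (k + 1) ∣ x + y := ⟨z, by rw [hx', hy', ← Nat.mul_add, hz]; ring⟩
  have := (padicValNat_dvd_iff_le hxy).mp hdvd
  omega

private lemma key (a : ℕ) (ha : Odd a) (ha1 : 1 < a) :
    ∀ s u v : ℕ, 0 < u → 0 < v → u + v ≤ s →
      ((padicValNat 2 u = padicValNat 2 v →
          Nat.gcd (a ^ u + 1) (a ^ v + 1) = a ^ (Nat.gcd u v) + 1) ∧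
       (padicValNat 2 u ≠ padicValNat 2 v →
          Nat.gcd (a ^ u + 1) (a ^ v + 1) = 2)) ∧
      ((padicValNat 2 v < padicValNat 2 u →
          Nat.gcd (a ^ u - 1) (a ^ v + 1) = a ^ (Nat.gcd u v) + 1) ∧
       (¬ padicValNat 2 v < padicValNat 2 u →
          Nat.gcd (a ^ u - 1) (a ^ v + 1) = 2)) := by
  intro s
  induction s with
  | zero => intro u v hu hv h; omega
  | succ s ih =>
    -- helper for F in the case v < u
    have hF : ∀ u v : ℕ, 0 < v → v < u → u ≤ s →
        (padicValNat 2 u = padicValNat 2 v →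
          Nat.gcd (a ^ u + 1) (a ^ v + 1) = a ^ (Nat.gcd u v) + 1) ∧
        (padicValNat 2 u ≠ padicValNat 2 v →
          Nat.gcd (a ^ u + 1) (a ^ v + 1) = 2) := by
      intro u v hv hvu hus
      set w := u - v with hw
      have hw0 : 0 < w := by omega
      have huw : u = w + v := by omega
      have hred : Nat.gcd (a ^ u + 1) (a ^ v + 1) = Nat.gcd (a ^ w - 1) (a ^ v + 1) := by
        apply gcd_helper1
        have hle : 1 ≤ a ^ w := Nat.one_le_pow _ _ (by omega)
        have hpow : a ^ u = a ^ w * a ^ v := by rw [huw, pow_add]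
        rw [Nat.mul_add, mul_one, ← hpow]
        omega
      have hG := (ih w v hw0 hv (by omega)).2
      have hgcd : Nat.gcd u v = Nat.gcd w v := by
        rw [huw, Nat.gcd_add_self_left]
      rcases lt_trichotomy (padicValNat 2 w) (padicValNat 2 v) with hc | hc | hc
      · have hadd : padicValNat 2 u = padicValNat 2 w := by
          rw [huw]; exact v2_add_of_lt (by omega) (by omega) hc
        constructor
        · intro h; omega
        · intro _; rw [hred]; exact hG.2 (by omega)
      · have hadd : padicValNat 2 w < padicValNat 2 u := by
          rw [huw]; exact v2_add_of_eq (by omega) (by omega) hc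
        constructor
        · intro h; omega
        · intro _; rw [hred]; exact hG.2 (by omega)
      · have hadd : padicValNat 2 u = padicValNat 2 v := by
          rw [huw, Nat.add_comm]; exact v2_add_of_lt (by omega) (by omega) hc
        constructor
        · intro _; rw [hred, hgcd]; exact hG.1 hc
        · intro h; omega
    intro u v hu hv hs
    constructor
    · -- F part
      rcases lt_trichotomy u v with hlt | heq | hgt
      · have := hF v u hu hlt (by omega)
        rw [Nat.gcd_comm (a ^ u + 1), Nat.gcd_comm u v]
        exact ⟨fun h => this.1 h.symm, fun h => this.2 (Ne.symm h)⟩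
      · subst heq
        rw [Nat.gcd_self, Nat.gcd_self]
        exact ⟨fun _ => rfl, fun h => absurd rfl h⟩
      · exact hF u v hv hgt (by omega)
    · -- G part
      rcases lt_trichotomy u v with hlt | heq | hgt
      · -- u < v : reduce to G (u, v - u)
        set w := v - u with hw
        have hw0 : 0 < w := by omega
        have hvw : v = w + u := by omega
        have hred : Nat.gcd (a ^ u - 1) (a ^ v + 1) =
            Nat.gcd (a ^ u - 1) (a ^ w + 1) := by
          have hle : 1 ≤ a ^ u := Nat.one_le_pow _ _ (by omega)
          have hle2 : 1 ≤ a ^ w := Nat.one_le_pow _ _ (by omega)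
          have hpow : a ^ v = a ^ w * a ^ u := by rw [hvw, pow_add]
          have hid : a ^ v + 1 = (a ^ w + 1) + a ^ w * (a ^ u - 1) := by
            rw [Nat.mul_sub, mul_one, ← hpow]
            have : a ^ w ≤ a ^ v := by rw [hpow]; exact Nat.le_mul_of_pos_right _ (by omega)
            omega
          rw [hid]
          exact Nat.gcd_add_mul_right_right _ _ _
        have hG := (ih u w hu hw0 (by omega)).2
        have hgcd : Nat.gcd u v = Nat.gcd u w := by
          rw [hvw, Nat.gcd_comm, Nat.gcd_add_self_left, Nat.gcd_comm]
        rcases lt_trichotomy (padicValNat 2 u) (padicValNat 2 w) with hc | hc | hc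
        · have hadd : padicValNat 2 v = padicValNat 2 u := by
            rw [hvw, Nat.add_comm]; exact v2_add_of_lt (by omega) (by omega) hc
          constructor
          · intro h; omega
          · intro _; rw [hred]; exact hG.2 (by omega)
        · have hadd : padicValNat 2 u < padicValNat 2 v := by
            rw [hvw, Nat.add_comm]; exact v2_add_of_eq (by omega) (by omega) hc
          constructor
          · intro h; omega
          · intro _; rw [hred]; exact hG.2 (by omega)
        · have hadd : padicValNat 2 v = padicValNat 2 w := by
            rw [hvw]; exact v2_add_of_lt (by omega) (by omega) hc
          constructor
          · intro _; rw [hred, hgcd]; exact hG.1 (by omega)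
          · intro h; omega
      · -- u = v : gcd (a^u - 1) (a^u + 1) = 2
        subst heq
        have hodd : Odd (a ^ u) := ha.pow
        have hle : 1 ≤ a ^ u := Nat.one_le_pow _ _ (by omega)
        have h2d : (2 : ℕ) ∣ Nat.gcd (a ^ u - 1) (a ^ u + 1) := by
          apply Nat.dvd_gcd
          · obtain ⟨m, hm⟩ := hodd; omega
          · obtain ⟨m, hm⟩ := hodd; omega
        have hd2 : Nat.gcd (a ^ u - 1) (a ^ u + 1) ∣ 2 := by
          have h1 := Nat.gcd_dvd_left (a ^ u - 1) (a ^ u + 1)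
          have h2 := Nat.gcd_dvd_right (a ^ u - 1) (a ^ u + 1)
          have := Nat.dvd_sub h2 h1
          have heq2 : a ^ u + 1 - (a ^ u - 1) = 2 := by omega
          rwa [heq2] at this
        have : Nat.gcd (a ^ u - 1) (a ^ u + 1) = 2 := Nat.dvd_antisymm hd2 h2d
        exact ⟨fun h => absurd h (lt_irrefl _), fun _ => this⟩
      · -- v < u : reduce to F (u - v, v)
        set w := u - v with hw
        have hw0 : 0 < w := by omega
        have huw : u = w + v := by omega
        have hred : Nat.gcd (a ^ u - 1) (a ^ v + 1) =
            Nat.gcd (a ^ w + 1) (a ^ v + 1) := by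
          apply gcd_helper1
          have hle : 1 ≤ a ^ u := Nat.one_le_pow _ _ (by omega)
          have hpow : a ^ u = a ^ w * a ^ v := by rw [huw, pow_add]
          rw [Nat.mul_add, mul_one, ← hpow]
          omega
        have hFwv := (ih w v hw0 hv (by omega)).1
        have hgcd : Nat.gcd u v = Nat.gcd w v := by
          rw [huw, Nat.gcd_add_self_left]
        rcases lt_trichotomy (padicValNat 2 w) (padicValNat 2 v) with hc | hc | hc
        · have hadd : padicValNat 2 u = padicValNat 2 w := by
            rw [huw]; exact v2_add_of_lt (by omega) (by omega) hc
          constructor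
          · intro h; omega
          · intro _; rw [hred]; exact hFwv.2 (by omega)
        · have hadd : padicValNat 2 w < padicValNat 2 u := by
            rw [huw]; exact v2_add_of_eq (by omega) (by omega) hc
          constructor
          · intro _; rw [hred, hgcd]; exact hFwv.1 hc
          · intro h; omega
        · have hadd : padicValNat 2 u = padicValNat 2 v := by
            rw [huw, Nat.add_comm]; exact v2_add_of_lt (by omega) (by omega) hc
          constructor
          · intro h; omega
          · intro _; rw [hred]; exact hFwv.2 (by omega)

theorem stmt3 (a u v : ℕ) (ha : Odd a) (ha1 : 1 < a) (hu : 0 < u) (hv : 0 < v) :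
    (padicValNat 2 u ≠ padicValNat 2 v → Nat.gcd (a ^ u + 1) (a ^ v + 1) = 2) ∧
    (padicValNat 2 u = padicValNat 2 v →
      Nat.gcd (a ^ u + 1) (a ^ v + 1) = a ^ (Nat.gcd u v) + 1) := by
  have h := (key a ha ha1 (u + v) u v hu hv le_rfl).1
  exact ⟨h.2, h.1⟩
end

section
/- Let p be an odd prime, s a positive integer, and let F be a field of characteristic p containing GF(p^s). For all X, Y ∈ F, the polynomial identity X·Y^{p^s} − X^{p^s}·Y − (Y^{p^s} − Y) + (X^{p^s} − X) = (Y − X)(1 − X)(1 − Y) · ∏_{α ∈ GF(p^s), α ≠ 0, α ≠ −1} (1 + α·X − (α+1)·Y) holds. -/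
/-!
With `q = p ^ s`, the set `T = S ∪ {0, -1}` consists of `q` roots of `z ^ q - z` (here `q` odd
gives `(-1) ^ q = -1`), so `∏_{α ∈ T} (z - α) = z ^ q - z`. Homogenising,
`b * ∏_{α ∈ T} (a - α b) = a ^ q b - a b ^ q`. For `a = 1 - Y`, `b = Y - X` the factor of `α` is
`1 + α X - (α + 1) Y`, the factors of `α = 0, -1` are `1 - Y` and `1 - X`, and the Frobenius
turns the right-hand side into the left-hand side of the identity.
-/

section

open Polynomial

theorem Finset.prod_X_sub_C_eq_X_pow_sub_X {R : Type*} [CommRing R] [IsDomain R] {q : ℕ}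
    (hq : 1 < q) {T : Finset R} (hT : ∀ α ∈ T, α ^ q = α) (hcard : T.card = q) :
    ∏ α ∈ T, (X - C α) = (X ^ q - X : R[X]) := by
  have hdeg : (X ^ q - X : R[X]).natDegree = q := by
    rw [natDegree_sub_eq_left_of_natDegree_lt] <;> simp [hq]
  have hne : (X ^ q - X : R[X]) ≠ 0 := fun h => by simp [h] at hdeg; omega
  have hdvd : ∏ α ∈ T, (X - C α) ∣ (X ^ q - X : R[X]) := by
    refine (Multiset.prod_X_sub_C_dvd_iff_le_roots hne T.val).mpr ?_
    refine (Multiset.le_iff_subset T.nodup).mpr fun α hα => ?_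
    simp [mem_roots hne, hT α hα]
  refine (eq_of_monic_of_dvd_of_natDegree_le (monic_prod_X_sub_C _ _) ?_ hdvd ?_).symm
  · exact monic_X_pow_sub (by rw [degree_X]; exact_mod_cast hq)
  · simp [hdeg, hcard]

theorem Finset.mul_prod_sub_mul_eq_pow_mul_sub_mul_pow {K : Type*} [Field K] {q : ℕ}
    (hq : 1 < q) {T : Finset K} (hT : ∀ α ∈ T, α ^ q = α) (hcard : T.card = q) (a b : K) :
    b * ∏ α ∈ T, (a - α * b) = a ^ q * b - a * b ^ q := by
  rcases eq_or_ne b 0 with rfl | hb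
  · simp [zero_pow (by omega : q ≠ 0)]
  have hroots : ∏ α ∈ T, (a / b - α) = (a / b) ^ q - a / b := by
    simpa [eval_prod] using congrArg (eval (a / b)) (prod_X_sub_C_eq_X_pow_sub_X hq hT hcard)
  calc b * ∏ α ∈ T, (a - α * b) = b * ∏ α ∈ T, (b * (a / b - α)) := by
        congr 1; refine prod_congr rfl fun α _ => ?_; field_simp
    _ = a ^ q * b - a * b ^ q := by
        rw [prod_mul_distrib, prod_const, hcard, hroots, div_pow]
        field_simp

end

theorem stmt5 (p s : ℕ) (hp : p.Prime) (hpodd : Odd p) (hs : 0 < s)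
    (F : Type*) [Field F] [CharP F p]
    (S : Finset F) (hS : ∀ α : F, α ∈ S ↔ (α ^ (p ^ s) = α ∧ α ≠ 0 ∧ α ≠ -1))
    (hScard : S.card = p ^ s - 2) :
    ∀ X Y : F,
      X * Y ^ (p ^ s) - X ^ (p ^ s) * Y - (Y ^ (p ^ s) - Y) + (X ^ (p ^ s) - X) =
        (Y - X) * (1 - X) * (1 - Y) * ∏ α ∈ S, (1 + α * X - (α + 1) * Y) := by
  classical
  intro X Y
  have : Fact p.Prime := ⟨hp⟩
  have hp2 : p ≠ 2 := by rintro rfl; exact absurd hpodd (by decide)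
  have hq : 2 < p ^ s := by have := hp.two_le; have := Nat.le_self_pow hs.ne' p; omega
  have h0 : (0 : F) ∉ insert (-1) S := by simp [hS]
  have h1 : (-1 : F) ∉ S := by simp [hS]
  have hT : ∀ α ∈ insert 0 (insert (-1) S), α ^ (p ^ s) = α := by
    simp only [Finset.mem_insert, forall_eq_or_imp, zero_pow (by omega : p ^ s ≠ 0),
      hpodd.pow.neg_one_pow, true_and]
    exact fun α hα => ((hS α).mp hα).1
  have hcard : (insert 0 (insert (-1) S)).card = p ^ s := by
    rw [Finset.card_insert_of_notMem h0, Finset.card_insert_of_notMem h1]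
    omega
  have hprod := Finset.mul_prod_sub_mul_eq_pow_mul_sub_mul_pow (by omega) hT hcard (1 - Y) (Y - X)
  rw [Finset.prod_insert h0, Finset.prod_insert h1, sub_pow_char_pow, sub_pow_char_pow,
    one_pow] at hprod
  have hfactor : ∀ α ∈ S, 1 - Y - α * (Y - X) = 1 + α * X - (α + 1) * Y := fun α _ => by ring
  rw [Finset.prod_congr rfl hfactor] at hprod
  linear_combination -hprod
end

section
/- Let p be an odd prime, m ≥ 2, q = p^m, 1 ≤ s < m, and suppose v_2(s) ≤ v_2(m). Let x and y be two distinct (q+1)-th roots of unity in GF(q^2), both different from 1. Then the determinant of the 3×3 matrix with rows (1,1,1), (1,x,y), (1,x^{p^s},y^{p^s}) is nonzero. -/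
/-!
Write `a = p ^ s`, `q = p ^ m`. The determinant is `(x - 1)(y^a - 1) - (y - 1)(x^a - 1)`. If it
vanished, applying the Frobenius `z ↦ z^q`, which inverts every `(q + 1)`-th root of unity, would
give a second relation, and together the two force `y x^a = x y^a`. Then `t = x / y` satisfies
`t^(a - 1) = 1` and `t^(q + 1) = 1`. The condition `v₂(s) ≤ v₂(m)` makes `gcd (p^s - 1) (p^m + 1)`
divide `2`, so `t = -1`. Substituting `x = -y` (and using that `a` is odd) gives `y^a = y`, so
likewise `y = -1` and `x = 1`, a contradiction.
-/

theorem Nat.dvd_of_dvd_two_mul_of_padicValNat_le {f s m : ℕ} (hs : s ≠ 0)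
    (hv : padicValNat 2 s ≤ padicValNat 2 m) (hfs : f ∣ s) (hfm : f ∣ 2 * m) : f ∣ m := by
  rcases eq_or_ne m 0 with rfl | hm
  · exact dvd_zero f
  have hf : f ≠ 0 := ne_zero_of_dvd_ne_zero hs hfs
  rw [← factorization_le_iff_dvd hf hm]
  intro r
  have hr_s := (factorization_le_iff_dvd hf hs).2 hfs r
  have hr_m := (factorization_le_iff_dvd hf (by positivity)).2 hfm r
  rw [factorization_mul two_ne_zero hm, Finsupp.add_apply, prime_two.factorization,
    Finsupp.single_apply] at hr_m
  split_ifs at hr_m with h2r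
  · subst h2r
    simp only [factorization_def _ prime_two] at hr_s hr_m ⊢
    omega
  · omega

theorem two_eq_zero_of_pow_eq_one_of_pow_eq_neg_one {R : Type*} [CommRing R] {u : R} {s m : ℕ}
    (hs : s ≠ 0) (hv : padicValNat 2 s ≤ padicValNat 2 m) (hus : u ^ s = 1) (hum : u ^ m = -1) :
    (2 : R) = 0 := by
  have hfs : orderOf u ∣ s := orderOf_dvd_of_pow_eq_one hus
  have hf2m : orderOf u ∣ 2 * m := orderOf_dvd_of_pow_eq_one (by rw [pow_mul', hum, neg_one_sq])
  have hum' : u ^ m = 1 :=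
    orderOf_dvd_iff_pow_eq_one.1 (Nat.dvd_of_dvd_two_mul_of_padicValNat_le hs hv hfs hf2m)
  linear_combination hum - hum'

theorem eq_one_or_eq_neg_one_of_pow_eq_self {K : Type*} [Field K] {p s m : ℕ} (hp : 0 < p)
    (hs : s ≠ 0) (hv : padicValNat 2 s ≤ padicValNat 2 m) {t : K} (hts : t ^ p ^ s = t)
    (htm : t ^ (p ^ m + 1) = 1) : t = 1 ∨ t = -1 := by
  have ht : t ≠ 0 := ne_zero_pow (Nat.succ_ne_zero _) (htm ▸ one_ne_zero)
  have hps : 1 ≤ p ^ s := Nat.one_le_pow _ _ hp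
  set d := orderOf t
  have hds : d ∣ p ^ s - 1 := orderOf_dvd_of_pow_eq_one <| by
    rw [pow_sub₀ t ht hps, hts, pow_one, mul_inv_cancel₀ ht]
  have hdm : d ∣ p ^ m + 1 := orderOf_dvd_of_pow_eq_one htm
  have hus : (p : ZMod d) ^ s = 1 := by
    have h := (ZMod.natCast_eq_zero_iff _ _).2 hds
    rwa [Nat.cast_sub hps, Nat.cast_pow, Nat.cast_one, sub_eq_zero] at h
  have hum : (p : ZMod d) ^ m = -1 := by
    have h := (ZMod.natCast_eq_zero_iff _ _).2 hdm
    push_cast at h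
    exact eq_neg_of_add_eq_zero_left h
  have hd2 : d ∣ 2 := (ZMod.natCast_eq_zero_iff _ _).1 <| by
    exact_mod_cast two_eq_zero_of_pow_eq_one_of_pow_eq_neg_one hs hv hus hum
  exact sq_eq_one_iff.1 (orderOf_dvd_iff_pow_eq_one.1 hd2)

theorem Matrix.det_fin_three_of_first_row_col_one {R : Type*} [CommRing R] (x y X Y : R) :
    !![1, 1, 1; 1, x, y; 1, X, Y].det = (x - 1) * (Y - 1) - (y - 1) * (X - 1) := by
  rw [det_fin_three]
  simp only [of_apply, cons_val', cons_val_zero, cons_val_one, cons_val_two, empty_val',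
    cons_val_fin_one, head_cons, tail_cons, head_fin_const]
  ring

theorem eq_one_or_eq_one_or_mul_eq_mul_of_relation_of_inv {K : Type*} [Field K] {x y X Y : K}
    (hx : x ≠ 0) (hy : y ≠ 0) (hX : X ≠ 0) (hY : Y ≠ 0)
    (h : (x - 1) * (Y - 1) = (y - 1) * (X - 1))
    (h' : (x⁻¹ - 1) * (Y⁻¹ - 1) = (y⁻¹ - 1) * (X⁻¹ - 1)) :
    x = 1 ∨ Y = 1 ∨ y * X = x * Y := by
  field_simp at h'
  have hprod : (x - 1) * (Y - 1) * (y * X - x * Y) = 0 := by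
    linear_combination h' - x * Y * h
  simpa only [mul_eq_zero, sub_eq_zero, or_assoc] using hprod

theorem mul_pow_eq_mul_pow_of_relation {K : Type*} [Field K] (p : ℕ) [Fact p.Prime] [CharP K p]
    {m s : ℕ} {x y : K} (hx : x ^ (p ^ m + 1) = 1) (hy : y ^ (p ^ m + 1) = 1) (hx1 : x ≠ 1)
    (hy1 : y ≠ 1) (h : (x - 1) * (y ^ p ^ s - 1) = (y - 1) * (x ^ p ^ s - 1)) :
    y * x ^ p ^ s = x * y ^ p ^ s := by
  have hne : ∀ z : K, z ^ (p ^ m + 1) = 1 → z ≠ 0 := fun z hz ↦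
    ne_zero_pow (Nat.succ_ne_zero _) (hz ▸ one_ne_zero)
  have hconj : ∀ z : K, z ^ (p ^ m + 1) = 1 → iterateFrobenius K p m z = z⁻¹ := fun z hz ↦ by
    rw [iterateFrobenius_def]
    exact eq_inv_of_mul_eq_one_left (by rwa [← pow_succ])
  have h' := congrArg (iterateFrobenius K p m) h
  simp only [map_mul, map_sub, map_one, map_pow, hconj x hx, hconj y hy, inv_pow] at h'
  have hy1' : y ^ p ^ s ≠ 1 := fun hys ↦
    hy1 (iterateFrobenius_inj K p s (by rwa [iterateFrobenius_def, map_one]))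
  rcases eq_one_or_eq_one_or_mul_eq_mul_of_relation_of_inv (hne x hx) (hne y hy)
    (pow_ne_zero _ (hne x hx)) (pow_ne_zero _ (hne y hy)) h h' with h1 | h1 | h1
  · exact absurd h1 hx1
  · exact absurd h1 hy1'
  · exact h1

theorem stmt6_general (p m s q : ℕ) (hp : p.Prime) (hpodd : Odd p)
    (hq : q = p ^ m) (hs1 : 1 ≤ s)
    (hv2 : padicValNat 2 s ≤ padicValNat 2 m)
    (F : Type*) [Field F] [Fintype F] (hF : Fintype.card F = q ^ 2)
    (x y : F) (hx : x ^ (q + 1) = 1) (hy : y ^ (q + 1) = 1)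
    (hxy : x ≠ y) (hx1 : x ≠ 1) (hy1 : y ≠ 1) :
    Matrix.det !![1, 1, 1; 1, x, y; 1, x ^ (p ^ s), y ^ (p ^ s)] ≠ 0 := by
  have : Fact p.Prime := ⟨hp⟩
  have : CharP F p := charP_of_card_eq_prime_pow (f := m * 2) (by rw [hF, hq, pow_mul])
  have hs : s ≠ 0 := by omega
  subst hq
  rw [Matrix.det_fin_three_of_first_row_col_one, sub_ne_zero]
  intro hrel
  have hy0 : y ≠ 0 := ne_zero_pow (Nat.succ_ne_zero _) (hy ▸ one_ne_zero)
  have hcross := mul_pow_eq_mul_pow_of_relation p hx hy hx1 hy1 hrel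
  have hx_neg : x = -y := by
    rcases eq_one_or_eq_neg_one_of_pow_eq_self (t := x / y) hp.pos hs hv2
      (by rw [div_pow]; field_simp; linear_combination hcross)
      (by rw [div_pow, hx, hy, div_one]) with h | h
    · exact absurd ((div_eq_one_iff_eq hy0).1 h) hxy
    · exact (div_eq_iff hy0).1 h |>.trans (neg_one_mul y)
  subst hx_neg
  have h2 : (2 : F) ≠ 0 := Ring.two_ne_zero <| by
    rw [ringChar.eq F p]
    rintro rfl
    exact Nat.not_even_iff_odd.2 hpodd even_two
  rw [hpodd.pow.neg_pow] at hrel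
  have hys : y ^ p ^ s = y := mul_left_cancel₀ h2 (by linear_combination -hrel)
  rcases eq_one_or_eq_neg_one_of_pow_eq_self hp.pos hs hv2 hys hy with h | h
  · exact hy1 h
  · exact hx1 (by rw [h, neg_neg])

theorem stmt6 (p m s q : ℕ) (hp : p.Prime) (hpodd : Odd p) (hm : 2 ≤ m)
    (hq : q = p ^ m) (hs1 : 1 ≤ s) (hs2 : s < m)
    (hv2 : padicValNat 2 s ≤ padicValNat 2 m)
    (F : Type*) [Field F] [Fintype F] (hF : Fintype.card F = q ^ 2)
    (x y : F) (hx : x ^ (q + 1) = 1) (hy : y ^ (q + 1) = 1)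
    (hxy : x ≠ y) (hx1 : x ≠ 1) (hy1 : y ≠ 1) :
    Matrix.det !![1, 1, 1; 1, x, y; 1, x ^ (p ^ s), y ^ (p ^ s)] ≠ 0 :=
  stmt6_general p m s q hp hpodd hq hs1 hv2 F hF x y hx hy hxy hx1 hy1
end

section
/- Let p be an odd prime, m ≥ 2, q = p^m, 1 ≤ s < m, and suppose v_2(s) > v_2(m). Let x and y be two distinct (q+1)-th roots of unity in GF(q^2), both different from 1, such that neither x nor y is a (p^{gcd(s,m)}+1)-th root of unity. Then the determinant of the 3×3 matrix with rows (1,1,1), (1,x,y), (1,x^{p^s},y^{p^s}) is nonzero. -/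
/-!
If the determinant vanishes, then `(x - 1)(y^{p^s} - 1) = (y - 1)(x^{p^s} - 1)`. Raising this to
the power `q` inverts every entry, since all four lie on the unit circle `z^{q+1} = 1`, and
comparing the two relations gives `x^{p^s} = x`. So `x` is a periodic point of `z ↦ z^p` of
periods `s` and `2m` (it is inverted after `m` steps), hence of period `gcd s (2m) ∣ 2d` with
`d = gcd s m`. As `v₂(s) > v₂(m)`, `m` is an odd multiple of `d`, so `d` steps act like `m` steps:
`x^{p^d} = x⁻¹`, contradicting `x^{p^d + 1} ≠ 1`.
-/

open Function

lemma odd_div_gcd_of_padicValNat_two_lt {m s : ℕ} (hm : m ≠ 0)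
    (h : padicValNat 2 m < padicValNat 2 s) : Odd (m / Nat.gcd s m) := by
  set v := padicValNat 2 m
  have hvd : 2 ^ v ∣ Nat.gcd s m :=
    Nat.dvd_gcd ((pow_dvd_pow 2 h.le).trans pow_padicValNat_dvd) pow_padicValNat_dvd
  rw [← Nat.not_even_iff_odd]
  rintro ⟨j, hj⟩
  have hm_eq : m = Nat.gcd s m * 2 * j := by
    rw [mul_assoc, two_mul, ← hj, Nat.mul_div_cancel' (Nat.gcd_dvd_right s m)]
  apply pow_succ_padicValNat_not_dvd (p := 2) hm
  rw [pow_succ]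
  nth_rw 2 [hm_eq]
  exact Dvd.dvd.mul_right (mul_dvd_mul_right hvd 2) j

theorem Function.IsPeriodicPt.iterate_mul_odd {α : Type*} {f : α → α} {x : α} {d k : ℕ}
    (hx : IsPeriodicPt f (2 * d) x) (hk : Odd k) : f^[d * k] x = f^[d] x := by
  obtain ⟨j, rfl⟩ := hk
  rw [show d * (2 * j + 1) = d + 2 * d * j by ring, iterate_add_apply, (hx.mul_const j).eq]

section GroupWithZero

variable {G₀ : Type*} [GroupWithZero G₀]

lemma pow_eq_inv_of_pow_succ_eq_one {z : G₀} {n : ℕ} (h : z ^ (n + 1) = 1) : z ^ n = z⁻¹ :=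
  eq_inv_of_mul_eq_one_left (by rwa [← pow_succ])

lemma pow_pow_gcd_add_one_eq_one {x : G₀} {a s m : ℕ} (hx : x ^ (a ^ m + 1) = 1)
    (hs : x ^ a ^ s = x) (hodd : Odd (m / Nat.gcd s m)) : x ^ (a ^ Nat.gcd s m + 1) = 1 := by
  set d := Nat.gcd s m
  have hinv : x ^ a ^ m = x⁻¹ := pow_eq_inv_of_pow_succ_eq_one hx
  have hper_s : IsPeriodicPt (· ^ a) s x := by
    simp only [IsPeriodicPt, IsFixedPt, pow_iterate, hs]
  have hper_2m : IsPeriodicPt (· ^ a) (2 * m) x := by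
    simp only [IsPeriodicPt, IsFixedPt, pow_iterate]
    rw [two_mul, pow_add, pow_mul, hinv, inv_pow, hinv, inv_inv]
  have hgcd : Nat.gcd s (2 * m) ∣ 2 * d := by
    rw [← Nat.gcd_mul_left]
    exact Nat.gcd_dvd_gcd_of_dvd_left _ (dvd_mul_left s 2)
  have hper_2d : IsPeriodicPt (· ^ a) (2 * d) x := (hper_s.gcd hper_2m).trans_dvd hgcd
  have hd : x ^ a ^ d = x⁻¹ := by
    have := hper_2d.iterate_mul_odd hodd
    rw [Nat.mul_div_cancel' (Nat.gcd_dvd_right s m)] at this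
    simp only [pow_iterate, hinv] at this
    exact this.symm
  rw [pow_succ, hd, inv_mul_cancel₀]
  rintro rfl
  simp at hx

end GroupWithZero

lemma eq_of_sub_one_mul_sub_one_eq_of_inv {K : Type*} [Field K] {x y X Y : K}
    (hx : x ≠ 0) (hy : y ≠ 0) (hX : X ≠ 0) (hY : Y ≠ 0) (hy1 : y ≠ 1) (hX1 : X ≠ 1)
    (hxy : x ≠ y) (h : (x - 1) * (Y - 1) = (y - 1) * (X - 1))
    (hinv : (x⁻¹ - 1) * (Y⁻¹ - 1) = (y⁻¹ - 1) * (X⁻¹ - 1)) : x = X := by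
  have hcross : (x - 1) * (Y - 1) * (y * X) = (y - 1) * (X - 1) * (x * Y) := by
    field_simp at hinv
    linear_combination hinv
  rw [h] at hcross
  have hyX : y * X = x * Y :=
    mul_left_cancel₀ (mul_ne_zero (sub_ne_zero.mpr hy1) (sub_ne_zero.mpr hX1)) hcross
  have hprod : (x - y) * (x - X) = 0 := by linear_combination (1 - x) * hyX - x * h
  exact sub_eq_zero.mp ((mul_eq_zero.mp hprod).resolve_left (sub_ne_zero.mpr hxy))

lemma pow_prime_pow_eq_self_of_det_eq_zero {F : Type*} [Field F] {p m s : ℕ} [Fact p.Prime]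
    [CharP F p] {x y : F} (hx : x ^ (p ^ m + 1) = 1) (hy : y ^ (p ^ m + 1) = 1) (hxy : x ≠ y)
    (hx1 : x ≠ 1) (hy1 : y ≠ 1)
    (hdet : Matrix.det !![1, 1, 1; 1, x, y; 1, x ^ (p ^ s), y ^ (p ^ s)] = 0) :
    x ^ p ^ s = x := by
  set X := x ^ p ^ s
  set Y := y ^ p ^ s
  have hX : X ^ (p ^ m + 1) = 1 := by rw [← pow_mul, mul_comm, pow_mul, hx, one_pow]
  have hY : Y ^ (p ^ m + 1) = 1 := by rw [← pow_mul, mul_comm, pow_mul, hy, one_pow]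
  have hX1 : X ≠ 1 := fun h ↦
    hx1 ((iterateFrobenius F p s).injective (by rw [map_one, iterateFrobenius_def]; exact h))
  have h : (x - 1) * (Y - 1) = (y - 1) * (X - 1) := by
    simp only [Matrix.det_fin_three, Matrix.of_apply, Matrix.cons_val', Matrix.cons_val_zero,
      Matrix.cons_val_fin_one, Matrix.cons_val_one, Matrix.cons_val] at hdet
    linear_combination hdet
  have hinv := congrArg (· ^ p ^ m) h
  simp only [mul_pow, sub_pow_char_pow, one_pow, pow_eq_inv_of_pow_succ_eq_one hx,
    pow_eq_inv_of_pow_succ_eq_one hy, pow_eq_inv_of_pow_succ_eq_one hX,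
    pow_eq_inv_of_pow_succ_eq_one hY] at hinv
  have ne_zero_of_pow {z : F} (hz : z ^ (p ^ m + 1) = 1) : z ≠ 0 :=
    ne_zero_pow (Nat.succ_ne_zero _) (hz ▸ one_ne_zero)
  exact (eq_of_sub_one_mul_sub_one_eq_of_inv (ne_zero_of_pow hx) (ne_zero_of_pow hy)
    (ne_zero_of_pow hX) (ne_zero_of_pow hY) hy1 hX1 hxy h hinv).symm

theorem stmt7_general (p m s q : ℕ) (hp : p.Prime) (hm : 2 ≤ m)
    (hq : q = p ^ m)
    (hv2 : padicValNat 2 m < padicValNat 2 s)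
    (F : Type*) [Field F] [Fintype F] (hF : Fintype.card F = q ^ 2)
    (x y : F) (hx : x ^ (q + 1) = 1) (hy : y ^ (q + 1) = 1)
    (hxy : x ≠ y) (hx1 : x ≠ 1) (hy1 : y ≠ 1)
    (hxU : x ^ (p ^ (Nat.gcd s m) + 1) ≠ 1) :
    Matrix.det !![1, 1, 1; 1, x, y; 1, x ^ (p ^ s), y ^ (p ^ s)] ≠ 0 := by
  intro hdet
  subst hq
  have : Fact p.Prime := ⟨hp⟩
  have : CharP F p := charP_of_card_eq_prime_pow (f := m * 2) (by rw [hF, pow_mul])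
  have hxs : x ^ p ^ s = x := pow_prime_pow_eq_self_of_det_eq_zero hx hy hxy hx1 hy1 hdet
  exact hxU (pow_pow_gcd_add_one_eq_one hx hxs (odd_div_gcd_of_padicValNat_two_lt (by omega) hv2))

theorem stmt7 (p m s q : ℕ) (hp : p.Prime) (hpodd : Odd p) (hm : 2 ≤ m)
    (hq : q = p ^ m) (hs1 : 1 ≤ s) (hs2 : s < m)
    (hv2 : padicValNat 2 m < padicValNat 2 s)
    (F : Type*) [Field F] [Fintype F] (hF : Fintype.card F = q ^ 2)
    (x y : F) (hx : x ^ (q + 1) = 1) (hy : y ^ (q + 1) = 1)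
    (hxy : x ≠ y) (hx1 : x ≠ 1) (hy1 : y ≠ 1)
    (hxU : x ^ (p ^ (Nat.gcd s m) + 1) ≠ 1) (hyU : y ^ (p ^ (Nat.gcd s m) + 1) ≠ 1) :
    Matrix.det !![1, 1, 1; 1, x, y; 1, x ^ (p ^ s), y ^ (p ^ s)] ≠ 0 :=
  stmt7_general p m s q hp hm hq hv2 F hF x y hx hy hxy hx1 hy1 hxU
end

section
/- Let p be an odd prime, m ≥ 2, q = p^m, and 1 ≤ s < m. Then q + 1 does not divide (p^s − 1)(q − 1)/2 and q + 1 does not divide (p^s + 1)(q − 1)/2. Consequently, if β is a primitive (q+1)-th root of unity in GF(q^2), then β^{(p^s−1)/2} ∉ GF(q) and β^{(p^s+1)/2} ∉ GF(q). -/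
private lemma aux1 (q n : ℕ) (hq1 : 1 ≤ q) (h2 : 2 ∣ n) (hn0 : 0 < n)
    (hnq : n ≤ q) : ¬ (q + 1) ∣ n * (q - 1) / 2 := by
  intro h
  obtain ⟨k, hk⟩ := h2
  have e : n * (q - 1) / 2 = k * (q - 1) := by
    rw [hk, mul_assoc, Nat.mul_div_cancel_left _ (by norm_num : 0 < 2)]
  rw [e] at h
  have h1 : (q + 1) ∣ k * (q + 1) := dvd_mul_left _ _
  have h2' : (q + 1) ∣ k * (q + 1) - k * (q - 1) := Nat.dvd_sub h1 h
  have hle : k * (q - 1) ≤ k * (q + 1) :=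
    Nat.mul_le_mul_left k (by omega)
  have e2 : k * (q + 1) - k * (q - 1) = 2 * k := by
    zify [hle, hq1]; ring
  rw [e2, ← hk] at h2'
  have := Nat.le_of_dvd hn0 h2'
  omega

private lemma aux2 (q n : ℕ) {F : Type*} [Field F] (β : F)
    (hβ : orderOf β = q + 1) (hq1 : 1 ≤ q) (h2 : 2 ∣ n)
    (hnd : ¬ (q + 1) ∣ n * (q - 1) / 2) :
    (β ^ (n / 2)) ^ q ≠ β ^ (n / 2) := by
  intro h
  set k := n / 2 with hkdef
  have hk : n = 2 * k := by
    have := Nat.div_mul_cancel h2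
    omega
  have hb1 : β ^ (q + 1) = 1 := by rw [← hβ]; exact pow_orderOf_eq_one β
  have hβ0 : β ≠ 0 := by
    intro h0
    rw [h0, zero_pow (by omega : q + 1 ≠ 0)] at hb1
    exact zero_ne_one hb1
  rw [← pow_mul] at h
  have he : k * (q - 1) + k = k * q := by
    rw [← Nat.mul_succ]; congr 1; omega
  rw [← he, pow_add] at h
  have h' : β ^ (k * (q - 1)) * β ^ k = 1 * β ^ k := by rw [one_mul]; exact h
  have h1 : β ^ (k * (q - 1)) = 1 := mul_right_cancel₀ (pow_ne_zero k hβ0) h'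
  have hd : (q + 1) ∣ k * (q - 1) := by
    rw [← hβ]; exact orderOf_dvd_of_pow_eq_one h1
  apply hnd
  have e : n * (q - 1) / 2 = k * (q - 1) := by
    rw [hk, mul_assoc, Nat.mul_div_cancel_left _ (by norm_num : 0 < 2)]
  rw [e]; exact hd

theorem stmt8 (p m s q : ℕ) (hp : p.Prime) (hpodd : Odd p) (hm : 2 ≤ m)
    (hq : q = p ^ m) (hs1 : 1 ≤ s) (hs2 : s < m)
    (F : Type*) [Field F] [Fintype F] (hF : Fintype.card F = q ^ 2)
    (β : F) (hβ : orderOf β = q + 1) :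
    ¬((q + 1) ∣ (p ^ s - 1) * (q - 1) / 2) ∧
    ¬((q + 1) ∣ (p ^ s + 1) * (q - 1) / 2) ∧
    (β ^ ((p ^ s - 1) / 2)) ^ q ≠ β ^ ((p ^ s - 1) / 2) ∧
    (β ^ ((p ^ s + 1) / 2)) ^ q ≠ β ^ ((p ^ s + 1) / 2) := by
  have hp3 : 3 ≤ p := by
    obtain ⟨t, ht⟩ := hpodd
    have := hp.two_le
    omega
  have hps : p ^ s < q := by
    rw [hq]; exact Nat.pow_lt_pow_right (by omega) hs2
  have hpsl : 3 ≤ p ^ s := le_trans hp3 (Nat.le_self_pow (by omega) p)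
  have hq1 : 1 ≤ q := by omega
  obtain ⟨t, ht⟩ := hpodd.pow (n := s)
  have hd1 : 2 ∣ p ^ s - 1 := by omega
  have hd2 : 2 ∣ p ^ s + 1 := by omega
  have A1 : ¬ (q + 1) ∣ (p ^ s - 1) * (q - 1) / 2 :=
    aux1 q _ hq1 hd1 (by omega) (by omega)
  have A2 : ¬ (q + 1) ∣ (p ^ s + 1) * (q - 1) / 2 :=
    aux1 q _ hq1 hd2 (by omega) (by omega)
  exact ⟨A1, A2, aux2 q _ β hβ hq1 hd1 A1, aux2 q _ β hβ hq1 hd2 A2⟩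
end

section
/- Let p be an odd prime, m ≥ 2, q = p^m, and 1 ≤ s < m. Then the q-cyclotomic cosets modulo q+1 of (p^s−1)/2 and (p^s+1)/2 are the two-element sets {(p^s−1)/2, q+1−(p^s−1)/2} and {(p^s+1)/2, q+1−(p^s+1)/2} respectively, and these two sets are disjoint. -/
/-! Since `q ≡ -1 (mod q + 1)`, multiplication by `q` acts on residues modulo `q + 1` as negation,
so the `q`-cyclotomic coset of any `0 < a ≤ q` is `{a, q + 1 - a}`. With `p ^ s = 2k + 1 < q`,
the two cosets in question are `{k, q + 1 - k}` and `{k + 1, q - k}`, and comparing their elements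
is linear arithmetic. -/

lemma natCast_self_eq_neg_one (q : ℕ) : (q : ZMod (q + 1)) = -1 := by
  rw [eq_neg_iff_add_eq_zero, ← Nat.cast_succ, ZMod.natCast_self]

lemma mul_pow_mod_succ_self {q a : ℕ} (ha0 : 0 < a) (ha : a ≤ q) (j : ℕ) :
    a * q ^ j % (q + 1) = if Even j then a else q + 1 - a := by
  have hval : (a : ZMod (q + 1)).val = a := ZMod.val_cast_of_lt (Nat.lt_succ_of_le ha)
  have ha_ne : (a : ZMod (q + 1)) ≠ 0 := fun h ↦ by simp [h] at hval; omega
  rw [← ZMod.val_natCast, Nat.cast_mul, Nat.cast_pow, natCast_self_eq_neg_one]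
  split_ifs with hj
  · rw [hj.neg_one_pow, mul_one, hval]
  · rw [(Nat.not_even_iff_odd.mp hj).neg_one_pow, mul_neg_one, ZMod.neg_val, if_neg ha_ne, hval]

lemma setOf_mul_pow_mod_succ_self {q a : ℕ} (ha0 : 0 < a) (ha : a ≤ q) :
    {x : ℕ | ∃ j : ℕ, x = a * q ^ j % (q + 1)} = {a, q + 1 - a} := by
  ext x
  simp only [Set.mem_ofPred_eq, Set.mem_insert_iff, Set.mem_singleton_iff,
    mul_pow_mod_succ_self ha0 ha]
  constructor
  · rintro ⟨j, rfl⟩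
    split_ifs <;> simp
  · rintro (rfl | rfl)
    exacts [⟨0, by simp⟩, ⟨1, by simp⟩]

theorem stmt9_general (p m s q : ℕ) (hp : p.Prime) (hpodd : Odd p)
    (hq : q = p ^ m) (hs1 : 1 ≤ s) (hs2 : s < m) :
    {x : ℕ | ∃ j : ℕ, x = (p ^ s - 1) / 2 * q ^ j % (q + 1)} =
      {(p ^ s - 1) / 2, q + 1 - (p ^ s - 1) / 2} ∧
    {x : ℕ | ∃ j : ℕ, x = (p ^ s + 1) / 2 * q ^ j % (q + 1)} =
      {(p ^ s + 1) / 2, q + 1 - (p ^ s + 1) / 2} ∧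
    (p ^ s - 1) / 2 ≠ q + 1 - (p ^ s - 1) / 2 ∧
    (p ^ s + 1) / 2 ≠ q + 1 - (p ^ s + 1) / 2 ∧
    Disjoint ({(p ^ s - 1) / 2, q + 1 - (p ^ s - 1) / 2} : Set ℕ)
      {(p ^ s + 1) / 2, q + 1 - (p ^ s + 1) / 2} := by
  have hp3 : 3 ≤ p := by
    obtain ⟨r, rfl⟩ := hpodd
    have := hp.two_le
    omega
  have hps3 : 3 ≤ p ^ s := hp3.trans (Nat.le_self_pow (by omega) p)
  have hpsq : p ^ s < q := hq ▸ Nat.pow_lt_pow_right (by omega) hs2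
  obtain ⟨k, hk⟩ := hpodd.pow (n := s)
  rw [show (p ^ s - 1) / 2 = k by omega, show (p ^ s + 1) / 2 = k + 1 by omega]
  refine ⟨setOf_mul_pow_mod_succ_self (by omega) (by omega),
    setOf_mul_pow_mod_succ_self (by omega) (by omega), by omega, by omega, ?_⟩
  rw [Set.disjoint_left]
  rintro x (rfl | rfl) hx <;>
    simp only [Set.mem_insert_iff, Set.mem_singleton_iff] at hx <;> omega

theorem stmt9 (p m s q : ℕ) (hp : p.Prime) (hpodd : Odd p) (hm : 2 ≤ m)
    (hq : q = p ^ m) (hs1 : 1 ≤ s) (hs2 : s < m) :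
    {x : ℕ | ∃ j : ℕ, x = (p ^ s - 1) / 2 * q ^ j % (q + 1)} =
      {(p ^ s - 1) / 2, q + 1 - (p ^ s - 1) / 2} ∧
    {x : ℕ | ∃ j : ℕ, x = (p ^ s + 1) / 2 * q ^ j % (q + 1)} =
      {(p ^ s + 1) / 2, q + 1 - (p ^ s + 1) / 2} ∧
    (p ^ s - 1) / 2 ≠ q + 1 - (p ^ s - 1) / 2 ∧
    (p ^ s + 1) / 2 ≠ q + 1 - (p ^ s + 1) / 2 ∧
    Disjoint ({(p ^ s - 1) / 2, q + 1 - (p ^ s - 1) / 2} : Set ℕ)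
      {(p ^ s + 1) / 2, q + 1 - (p ^ s + 1) / 2} :=
  stmt9_general p m s q hp hpodd hq hs1 hs2
end

section
/- Let q be an odd prime power with q ≡ 1 (mod 4), and let (a_0,a_1,a_2,a_3) ∈ GF(q^2)^4. Let N_0 be the number of x in U_{2(q^2+1)} (the 2(q^2+1)-th roots of unity in GF(q^4)) with a_0·x + a_1·x^{q^2} + a_2·x^{q^2+q+1} + a_3·x^{q^4+q^3+q^2} = 0, and let N_1 be the number of y in U_{q^2+1} with a_0·y + a_1·y^q + a_2·y^{q+1} + a_3 = 0. Then N_0 = 2·N_1. -/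
theorem stmt11 (q p n : ℕ) (hp : p.Prime) (hpodd : Odd p) (hn : 0 < n) (hq : q = p ^ n)
    (hq4 : q % 4 = 1)
    (F : Type*) [Field F] [Fintype F] (hF : Fintype.card F = q ^ 4)
    (a0 a1 a2 a3 : F) (ha0 : a0 ^ (q ^ 2) = a0) (ha1 : a1 ^ (q ^ 2) = a1)
    (ha2 : a2 ^ (q ^ 2) = a2) (ha3 : a3 ^ (q ^ 2) = a3) :
    Nat.card {x : F // x ^ (2 * (q ^ 2 + 1)) = 1 ∧
        a0 * x + a1 * x ^ (q ^ 2) + a2 * x ^ (q ^ 2 + q + 1) +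
          a3 * x ^ (q ^ 4 + q ^ 3 + q ^ 2) = 0} =
      2 * Nat.card {y : F // y ^ (q ^ 2 + 1) = 1 ∧
        a0 * y + a1 * y ^ q + a2 * y ^ (q + 1) + a3 = 0} := by
  classical
  -- arithmetic setup
  have hq2 : q % 2 = 1 := by omega
  have hq1 : 1 ≤ q := by omega
  set k : ℕ := (q + 1) / 2 with hkdef
  have h2k : 2 * k = q + 1 := by omega
  have hkodd : Odd k := by
    refine ⟨(q - 1)/4, by omega⟩
  set M : ℕ := q ^ 2 + 1 with hMdef
  have hM2 : 2 ≤ M := by nlinarith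
  -- k coprime to M
  have hcop : Nat.Coprime k M := by
    have h1 : Nat.Coprime k 2 := hkodd.coprime_two_right
    have h2 : Nat.Coprime k (2 + k * (2 * (q - 1))) :=
      (Nat.coprime_add_mul_left_right k 2 (2 * (q - 1))).mpr h1
    have he : 2 + k * (2 * (q - 1)) = M := by
      rw [hMdef]
      obtain ⟨r, rfl⟩ : ∃ r, q = r + 1 := ⟨q - 1, by omega⟩
      have hk' : 2 * k = r + 2 := by omega
      simp only [Nat.add_sub_cancel]
      have h3 : k * (2 * r) = (r + 2) * r := by
        rw [show k * (2 * r) = (2 * k) * r from by ring, hk']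
      rw [h3]; ring
    rwa [he] at h2
  -- inverse of k mod M
  set c : ℕ := k ^ (Nat.totient M - 1) with hcdef
  have htot : 1 ≤ Nat.totient M := (Nat.totient_pos).mpr (by omega)
  have hkc : (k * c) % M = 1 := by
    have h := Nat.ModEq.pow_totient hcop
    have : k * c = k ^ Nat.totient M := by
      rw [hcdef]
      rw [← pow_succ']
      congr 1
      omega
    rw [this]
    have h1M : 1 % M = 1 := Nat.mod_eq_of_lt (by omega)
    calc k ^ Nat.totient M % M = 1 % M := h
      _ = 1 := h1M
  set t : ℕ := (k * c) / M with htdef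
  have ht : k * c = M * t + 1 := by
    have h := Nat.div_add_mod (k * c) M
    rw [hkc] at h
    exact h.symm
  -- char ≠ 2
  have hqodd : Odd (q ^ 4) := (Nat.odd_iff.mpr hq2).pow
  haveI : CharP F (ringChar F) := ringChar.charP F
  obtain ⟨m', hrp, hcard'⟩ := FiniteField.card F (ringChar F)
  have hch : ringChar F ≠ 2 := by
    intro h2
    rw [h2, hF] at hcard'
    have heven : Even ((2 : ℕ) ^ (m' : ℕ)) :=
      (Nat.even_pow).mpr ⟨even_two, by exact_mod_cast m'.2.ne'⟩
    rw [← hcard'] at heven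
    exact (Nat.not_odd_iff_even.mpr heven) hqodd
  have htwo : (2 : F) ≠ 0 := by
    intro h
    have h2' : ((2 : ℕ) : F) = 0 := by push_cast; exact h
    have hdvd : ringChar F ∣ 2 := (CharP.cast_eq_zero_iff F (ringChar F) 2).mp h2'
    rcases (Nat.dvd_prime Nat.prime_two).mp hdvd with h1 | h1
    · exact hrp.ne_one h1
    · exact hch h1
  have hneg : ∀ x : F, x ≠ 0 → x ≠ -x := by
    intro x hx h
    apply hx
    have : (2 : F) * x = 0 := by linear_combination h
    rcases mul_eq_zero.mp this with h' | h'
    · exact absurd h' htwo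
    · exact h'
  -- nonzero from root of unity
  have hnz : ∀ (x : F) (j : ℕ), 0 < j → x ^ j = 1 → x ≠ 0 := by
    intro x j hj hxj h0
    rw [h0, zero_pow hj.ne'] at hxj
    exact zero_ne_one hxj
  -- key transfer identity
  have htrans : ∀ x : F, x ^ (2 * (q ^ 2 + 1)) = 1 →
      a0 * x ^ (q+1) + a1 * (x ^ (q+1)) ^ q + a2 * (x ^ (q+1)) ^ (q+1) + a3 =
      (a0 * x + a1 * x ^ (q ^ 2) + a2 * x ^ (q ^ 2 + q + 1) +
        a3 * x ^ (q ^ 4 + q ^ 3 + q ^ 2)) * x ^ q := by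
    intro x hx
    have he : q ^ 4 + q ^ 3 + q ^ 2 + q = 2 * (q ^ 2 + 1) * (q * k) := by
      have h1 : 2 * (q ^ 2 + 1) * (q * k) = (q ^ 2 + 1) * q * (2 * k) := by ring
      rw [h1, h2k]; ring
    have h1 : x ^ (q ^ 4 + q ^ 3 + q ^ 2 + q) = 1 := by
      rw [he, pow_mul, hx, one_pow]
    linear_combination (-a3) * h1
  -- surjectivity helper
  have hsurj : ∀ y : F, y ^ (q ^ 2 + 1) = 1 →
      ∃ x0 : F, x0 ^ (2 * (q ^ 2 + 1)) = 1 ∧ x0 ^ (q + 1) = y := by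
    intro y hy
    have hy0 : y ≠ 0 := hnz y (q ^ 2 + 1) (by omega) hy
    have hu : ∃ u, q ^ 2 = 2 * u + 1 := ⟨q ^ 2 / 2, by
      have : q ^ 2 % 2 = 1 := Nat.odd_iff.mp ((Nat.odd_iff.mpr hq2).pow)
      omega⟩
    obtain ⟨u, hu⟩ := hu
    have hdiv : q ^ 4 / 2 = (q ^ 2 + 1) * u := by
      have h' : q ^ 4 = 2 * ((q ^ 2 + 1) * u) + 1 := by
        have : q ^ 4 = q ^ 2 * q ^ 2 := by ring
        rw [this, hu]; ring
      rw [h', Nat.mul_add_div (by norm_num)]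
      norm_num
    have hysq : IsSquare y := by
      rw [FiniteField.isSquare_iff hch hy0, hF, hdiv, pow_mul, hy, one_pow]
    obtain ⟨w, hw⟩ := hysq
    have hwy : w ^ 2 = y := by rw [sq]; exact hw.symm
    have hwm : w ^ (2 * (q ^ 2 + 1)) = 1 := by
      rw [pow_mul, hwy, hy]
    refine ⟨w ^ c, ?_, ?_⟩
    · rw [← pow_mul, mul_comm c, pow_mul, hwm, one_pow]
    · rw [← pow_mul]
      have hce : c * (q + 1) = 2 * (q ^ 2 + 1) * t + 2 := by
        have h1 : c * (q + 1) = 2 * (k * c) := by rw [← h2k]; ring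
        rw [h1, ht]; ring
      rw [hce, pow_add, pow_mul, hwm, one_pow, one_mul, hwy]
  -- z^{q+1}=1 and z^{2M}=1 implies z^2=1
  have hz2 : ∀ z : F, z ^ (2 * (q ^ 2 + 1)) = 1 → z ^ (q + 1) = 1 → z ^ 2 = 1 := by
    intro z hzm hzq
    have h4 : z ^ 4 = 1 := by
      have he : 2 * (q ^ 2 + 1) = (q + 1) * (2 * (q - 1)) + 4 := by
        obtain ⟨r, rfl⟩ : ∃ r, q = r + 1 := ⟨q - 1, by omega⟩
        simp only [Nat.add_sub_cancel]
        ring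
      rw [he, pow_add, pow_mul, hzq, one_pow, one_mul] at hzm
      exact hzm
    have hs : ∃ s, q + 1 = 4 * s + 2 := ⟨q / 4, by omega⟩
    obtain ⟨s, hs⟩ := hs
    rw [hs, pow_add, pow_mul, h4, one_pow, one_mul] at hzq
    exact hzq
  -- now the counting
  rw [Nat.card_eq_fintype_card, Nat.card_eq_fintype_card, Fintype.card_subtype,
    Fintype.card_subtype]
  set P0 : F → Prop := fun x => x ^ (2 * (q ^ 2 + 1)) = 1 ∧
      a0 * x + a1 * x ^ (q ^ 2) + a2 * x ^ (q ^ 2 + q + 1) +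
        a3 * x ^ (q ^ 4 + q ^ 3 + q ^ 2) = 0 with hP0
  set P1 : F → Prop := fun y => y ^ (q ^ 2 + 1) = 1 ∧
      a0 * y + a1 * y ^ q + a2 * y ^ (q + 1) + a3 = 0 with hP1
  set A : Finset F := Finset.univ.filter P0 with hA
  set B : Finset F := Finset.univ.filter P1 with hB
  show A.card = 2 * B.card
  have hmapsto : ∀ x ∈ A, x ^ (q + 1) ∈ B := by
    intro x hx
    rw [hA, Finset.mem_filter] at hx
    obtain ⟨-, hxm, hxe⟩ := hx
    rw [hB, Finset.mem_filter]
    refine ⟨Finset.mem_univ _, ?_, ?_⟩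
    · rw [← pow_mul]
      have he : (q + 1) * (q ^ 2 + 1) = 2 * (q ^ 2 + 1) * k := by
        rw [show 2 * (q ^ 2 + 1) * k = (2 * k) * (q ^ 2 + 1) from by ring, h2k]
      rw [he, pow_mul, hxm, one_pow]
    · rw [htrans x hxm, hxe, zero_mul]
  rw [Finset.card_eq_sum_card_fiberwise hmapsto]
  have hfib : ∀ y ∈ B, (A.filter fun x => x ^ (q + 1) = y).card = 2 := by
    intro y hy
    rw [hB, Finset.mem_filter] at hy
    obtain ⟨-, hy1, hy2⟩ := hy
    obtain ⟨x0, hx0m, hx0y⟩ := hsurj y hy1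
    have hx0ne : x0 ≠ 0 := hnz x0 _ (by positivity) hx0m
    have hE0 : ∀ x : F, x ^ (2 * (q ^ 2 + 1)) = 1 → x ^ (q + 1) = y →
        a0 * x + a1 * x ^ (q ^ 2) + a2 * x ^ (q ^ 2 + q + 1) +
          a3 * x ^ (q ^ 4 + q ^ 3 + q ^ 2) = 0 := by
      intro x hxm hxy
      have h := htrans x hxm
      rw [hxy, hy2] at h
      have hxne : x ≠ 0 := hnz x _ (by positivity) hxm
      have := h.symm
      rcases mul_eq_zero.mp this with h' | h'
      · exact h'
      · exact absurd h' (pow_ne_zero _ hxne)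
    have hset : (A.filter fun x => x ^ (q + 1) = y) = {x0, -x0} := by
      ext x
      simp only [hA, Finset.mem_filter, Finset.mem_univ, true_and, Finset.mem_insert,
        Finset.mem_singleton, hP0]
      constructor
      · rintro ⟨⟨hxm, hxe⟩, hxy⟩
        have hz : (x * x0⁻¹) ^ 2 = 1 := by
          apply hz2
          · rw [mul_pow, inv_pow, hxm, hx0m, inv_one, mul_one]
          · rw [mul_pow, inv_pow, hxy, hx0y, mul_inv_cancel₀ (hnz y _ (by omega) hy1)]
        have hzz : (x * x0⁻¹ - 1) * (x * x0⁻¹ + 1) = 0 := by linear_combination hz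
        have hrec : x = (x * x0⁻¹) * x0 := by field_simp
        rcases mul_eq_zero.mp hzz with h' | h'
        · left
          have h1 : x * x0⁻¹ = 1 := by linear_combination h'
          rw [h1, one_mul] at hrec
          exact hrec
        · right
          have h1 : x * x0⁻¹ = -1 := by linear_combination h'
          rw [h1, neg_one_mul] at hrec
          exact hrec
      · rintro (rfl | rfl)
        · exact ⟨⟨hx0m, hE0 _ hx0m hx0y⟩, hx0y⟩
        · have hm : (-x0) ^ (2 * (q ^ 2 + 1)) = 1 := by
            rw [pow_mul, neg_sq, ← pow_mul]
            exact hx0m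
          have hqy : (-x0) ^ (q + 1) = y := by
            rw [← h2k, pow_mul, neg_sq, ← pow_mul, h2k, hx0y]
          exact ⟨⟨hm, hE0 (-x0) hm hqy⟩, hqy⟩
    rw [hset]
    rw [Finset.card_insert_of_notMem (by simp [hneg x0 hx0ne]), Finset.card_singleton]
  rw [Finset.sum_congr rfl hfib, Finset.sum_const, smul_eq_mul, mul_comm]
end

section
/- Let q be an odd prime power with q ≡ 3 (mod 4). Then the q-cyclotomic coset of q^2+2 modulo 2(q^2+1) equals the four-element set {q^2+2, q^2+q+1, 2q^2−q+2, 2q^2+1}. -/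
theorem stmt18 (q p n : ℕ) (hp : p.Prime) (hpodd : Odd p) (hn : 0 < n) (hq : q = p ^ n)
    (hq4 : q % 4 = 3) :
    {x : ℕ | ∃ j : ℕ, x = (q ^ 2 + 2) * q ^ j % (2 * (q ^ 2 + 1))} =
      ({q ^ 2 + 2, q ^ 2 + q + 1, 2 * q ^ 2 - q + 2, 2 * q ^ 2 + 1} : Set ℕ) ∧
    ({q ^ 2 + 2, q ^ 2 + q + 1, 2 * q ^ 2 - q + 2, 2 * q ^ 2 + 1} : Finset ℕ).card = 4 := by
  clear hp hpodd hn hq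
  obtain ⟨k, hk⟩ : ∃ k, q = 4 * k + 3 := ⟨q / 4, by omega⟩
  set m : ℕ := 2 * k + 1 with hm
  have hqm : q = 2 * m + 1 := by omega
  have hq2 : q ^ 2 = 4 * m ^ 2 + 4 * m + 1 := by rw [hqm]; ring
  have hm1 : 1 ≤ m := by omega
  have hmm : m ≤ m ^ 2 := by nlinarith
  -- abbreviation facts
  have hA : 2 * q ^ 2 - q + 2 = 8 * m ^ 2 + 6 * m + 3 := by
    rw [hq2, hqm]; omega
  have e0 : (q ^ 2 + 2) * q ^ 0 % (2 * (q ^ 2 + 1)) = q ^ 2 + 2 := by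
    rw [pow_zero, mul_one, Nat.mod_eq_of_lt]
    rw [hq2]; omega
  have e1 : (q ^ 2 + 2) * q ^ 1 % (2 * (q ^ 2 + 1)) = q ^ 2 + q + 1 := by
    have hd : (q ^ 2 + 2) * q ^ 1 = (q ^ 2 + q + 1) + m * (2 * (q ^ 2 + 1)) := by
      rw [hqm]; ring
    rw [hd, Nat.add_mul_mod_self_right, Nat.mod_eq_of_lt]
    rw [hq2, hqm]; omega
  have e2 : (q ^ 2 + 2) * q ^ 2 % (2 * (q ^ 2 + 1)) = 2 * q ^ 2 + 1 := by
    have hd : (q ^ 2 + 2) * q ^ 2 = (2 * q ^ 2 + 1) + (2 * m ^ 2 + 2 * m) * (2 * (q ^ 2 + 1)) := by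
      rw [hqm]; ring
    rw [hd, Nat.add_mul_mod_self_right, Nat.mod_eq_of_lt]
    rw [hq2]; omega
  have e3 : (q ^ 2 + 2) * q ^ 3 % (2 * (q ^ 2 + 1)) = 2 * q ^ 2 - q + 2 := by
    have hd : (q ^ 2 + 2) * q ^ 3 =
        (8 * m ^ 2 + 6 * m + 3) + (4 * m ^ 3 + 6 * m ^ 2 + 4 * m) * (2 * (q ^ 2 + 1)) := by
      rw [hqm]; ring
    rw [hd, Nat.add_mul_mod_self_right, Nat.mod_eq_of_lt, hA]
    rw [hq2]; omega
  have estep : ∀ j, (q ^ 2 + 2) * q ^ (j + 4) % (2 * (q ^ 2 + 1))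
      = (q ^ 2 + 2) * q ^ j % (2 * (q ^ 2 + 1)) := by
    intro j
    have hd : (q ^ 2 + 2) * q ^ (j + 4)
        = (q ^ 2 + 2) * q ^ j + ((q ^ 2 + 2) * q ^ j * (2 * m ^ 2 + 2 * m)) * (2 * (q ^ 2 + 1)) := by
      rw [hqm]; ring
    rw [hd, Nat.add_mul_mod_self_right]
  have key : ∀ j, (q ^ 2 + 2) * q ^ j % (2 * (q ^ 2 + 1))
      ∈ ({q ^ 2 + 2, q ^ 2 + q + 1, 2 * q ^ 2 - q + 2, 2 * q ^ 2 + 1} : Set ℕ) := by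
    intro j
    induction j using Nat.strong_induction_on with
    | _ j ih =>
      rcases lt_or_ge j 4 with h | h
      · interval_cases j
        · rw [e0]; left; rfl
        · rw [e1]; right; left; rfl
        · rw [e2]; right; right; right; rfl
        · rw [e3]; right; right; left; rfl
      · obtain ⟨j', rfl⟩ : ∃ j', j = j' + 4 := ⟨j - 4, by omega⟩
        rw [estep]
        exact ih j' (by omega)
  constructor
  · ext x
    constructor
    · rintro ⟨j, rfl⟩
      exact key j
    · rintro (rfl | rfl | rfl | rfl)
      · exact ⟨0, e0.symm⟩
      · exact ⟨1, e1.symm⟩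
      · exact ⟨3, e3.symm⟩
      · exact ⟨2, e2.symm⟩
  · have n1 : q ^ 2 + 2 ≠ q ^ 2 + q + 1 := by rw [hq2, hqm]; omega
    have n2 : q ^ 2 + 2 ≠ 2 * q ^ 2 - q + 2 := by rw [hA, hq2]; nlinarith
    have n3 : q ^ 2 + 2 ≠ 2 * q ^ 2 + 1 := by rw [hq2]; nlinarith
    have n4 : q ^ 2 + q + 1 ≠ 2 * q ^ 2 - q + 2 := by rw [hA, hq2, hqm]; nlinarith
    have n5 : q ^ 2 + q + 1 ≠ 2 * q ^ 2 + 1 := by rw [hq2, hqm]; nlinarith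
    have n6 : 2 * q ^ 2 - q + 2 ≠ 2 * q ^ 2 + 1 := by rw [hA, hq2]; omega
    rw [Finset.card_insert_of_notMem (by
        simp only [Finset.mem_insert, Finset.mem_singleton]
        push_neg
        exact ⟨n1, n2, n3⟩),
      Finset.card_insert_of_notMem (by
        simp only [Finset.mem_insert, Finset.mem_singleton]
        push_neg
        exact ⟨n4, n5⟩),
      Finset.card_insert_of_notMem (by
        simp only [Finset.mem_singleton]
        exact n6),
      Finset.card_singleton]
end
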